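/- arXiv:2309.00539 — 3 statements merged into one kernel-verified Lean document; each statement's English description precedes it below -/
import Mathlib

section
/- The integral ∫_0^1 (ln(1−t))³ / t dt equals −6·ζ(4) = −π⁴/15. -/
/-!
Substituting `t ↦ 1 - t` and expanding `1 / (1 - u) = ∑ uⁿ` turns the integral into
`-∑ₙ ∫₀¹ (-log u)³ uⁿ du`. The further substitution `u = e^{-x}` makes each term a Gamma
integral, `∫₀^∞ x³ e^{-(n+1)x} dx = 3! / (n+1)⁴`, and the terms are nonnegative, so the exchange
of sum and integral is justified by the summability of `∑ 1 / (n+1)⁴ = ζ(4) = π⁴ / 90`.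
For the power `k` in place of `3` the same computation gives `(-1)ᵏ k! ζ(k+1)`.
-/

open Real MeasureTheory Set
open scoped Nat

lemma image_exp_neg_Ioi_zero : (fun x : ℝ => exp (-x)) '' Ioi 0 = Ioo 0 1 := by
  rw [← exp_zero, ← image_exp_Iio, ← neg_zero, ← image_neg_Ioi, image_image, neg_zero]

lemma hasDerivWithinAt_exp_neg (s : Set ℝ) (x : ℝ) :
    HasDerivWithinAt (fun x : ℝ => exp (-x)) (-exp (-x)) s x := by
  simpa using ((hasDerivAt_neg x).exp).hasDerivWithinAt

lemma injOn_exp_neg (s : Set ℝ) : InjOn (fun x : ℝ => exp (-x)) s :=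
  fun _ _ _ _ h => neg_injective (exp_injective h)

section Substitution

variable {E : Type*} [NormedAddCommGroup E] [NormedSpace ℝ E]

theorem integral_comp_exp_neg_Ioi (g : ℝ → E) :
    ∫ x in Ioi 0, exp (-x) • g (exp (-x)) = ∫ t in Ioo 0 1, g t := by
  rw [← image_exp_neg_Ioi_zero, integral_image_eq_integral_abs_deriv_smul measurableSet_Ioi
    (fun x _ => hasDerivWithinAt_exp_neg _ x) (injOn_exp_neg _)]
  simp [abs_of_pos (exp_pos _)]

theorem integrableOn_comp_exp_neg_Ioi (g : ℝ → E) :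
    IntegrableOn (fun x => exp (-x) • g (exp (-x))) (Ioi 0) ↔ IntegrableOn g (Ioo 0 1) := by
  rw [← image_exp_neg_Ioi_zero, integrableOn_image_iff_integrableOn_abs_deriv_smul
    measurableSet_Ioi (fun x _ => hasDerivWithinAt_exp_neg _ x) (injOn_exp_neg _)]
  simp [abs_of_pos (exp_pos _)]

theorem integral_Ioo_zero_one_comp_one_sub (g : ℝ → E) :
    ∫ t in Ioo 0 1, g (1 - t) = ∫ t in Ioo 0 1, g t := by
  simp only [← integral_Ioc_eq_integral_Ioo, ← intervalIntegral.integral_of_le zero_le_one]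
  simp [intervalIntegral.integral_comp_sub_left g (1 : ℝ) (a := 0) (b := 1)]

end Substitution

theorem integral_pow_mul_exp_neg_mul_Ioi (k : ℕ) {r : ℝ} (hr : 0 < r) :
    ∫ x in Ioi 0, x ^ k * exp (-(r * x)) = k ! / r ^ (k + 1) := by
  have h := integral_rpow_mul_exp_neg_mul_Ioi (a := k + 1) (by positivity) hr
  simp only [add_sub_cancel_right, rpow_natCast, Gamma_nat_eq_factorial] at h
  rw [h, ← Nat.cast_succ, rpow_natCast, one_div_pow, one_div_mul_eq_div]

theorem integrableOn_pow_mul_exp_neg_mul_Ioi (k : ℕ) {r : ℝ} (hr : 0 < r) :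
    IntegrableOn (fun x : ℝ => x ^ k * exp (-(r * x))) (Ioi 0) := by
  simpa [rpow_natCast] using integrableOn_rpow_mul_exp_neg_mul_rpow (p := 1) (s := k)
    (by linarith [k.cast_nonneg (α := ℝ)]) one_pos hr

lemma exp_neg_smul_neg_log_pow_mul_pow_comp_exp_neg (k n : ℕ) (x : ℝ) :
    exp (-x) • ((-log (exp (-x))) ^ k * exp (-x) ^ n) = x ^ k * exp (-((n + 1) * x)) := by
  rw [log_exp, neg_neg, smul_eq_mul, ← exp_nat_mul, mul_left_comm, ← exp_add]
  ring_nf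

theorem integrableOn_neg_log_pow_mul_pow (k n : ℕ) :
    IntegrableOn (fun t : ℝ => (-log t) ^ k * t ^ n) (Ioo 0 1) := by
  rw [← integrableOn_comp_exp_neg_Ioi]
  simpa only [exp_neg_smul_neg_log_pow_mul_pow_comp_exp_neg] using
    integrableOn_pow_mul_exp_neg_mul_Ioi k (n.cast_add_one_pos (α := ℝ))

theorem integral_neg_log_pow_mul_pow (k n : ℕ) :
    ∫ t in Ioo 0 1, (-log t) ^ k * t ^ n = k ! / ((n : ℝ) + 1) ^ (k + 1) := by
  rw [← integral_comp_exp_neg_Ioi]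
  simpa only [exp_neg_smul_neg_log_pow_mul_pow_comp_exp_neg] using
    integral_pow_mul_exp_neg_mul_Ioi k (n.cast_add_one_pos (α := ℝ))

theorem hasSum_integral_neg_log_pow_mul_pow {k : ℕ} (hk : k ≠ 0) :
    HasSum (fun n : ℕ => k ! / ((n : ℝ) + 1) ^ (k + 1))
      (∫ t in Ioo 0 1, ∑' n : ℕ, (-log t) ^ k * t ^ n) := by
  have hnorm (n : ℕ) :
      ∫ t in Ioo 0 1, ‖(-log t) ^ k * t ^ n‖ = k ! / ((n : ℝ) + 1) ^ (k + 1) := by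
    rw [← integral_neg_log_pow_mul_pow]
    exact setIntegral_congr_fun measurableSet_Ioo fun t ht => norm_of_nonneg <|
      mul_nonneg (pow_nonneg (neg_nonneg.mpr (log_nonpos ht.1.le ht.2.le)) k) (pow_nonneg ht.1.le n)
  have hsummable : Summable fun n : ℕ => k ! / ((n : ℝ) + 1) ^ (k + 1) := by
    simp_rw [div_eq_mul_one_div (k ! : ℝ)]
    refine Summable.mul_left _ ?_
    exact_mod_cast (summable_nat_add_iff 1).mpr (summable_one_div_nat_pow.mpr (by omega))
  simpa only [integral_neg_log_pow_mul_pow] using hasSum_integral_of_summable_integral_norm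
    (integrableOn_neg_log_pow_mul_pow k) (by simpa only [hnorm] using hsummable)

lemma log_pow_div_one_sub_eq_tsum {u : ℝ} (hu : u ∈ Ioo 0 1) (k : ℕ) :
    log u ^ k / (1 - u) = (-1) ^ k * ∑' n : ℕ, (-log u) ^ k * u ^ n := by
  rw [tsum_mul_left, tsum_geometric_of_lt_one hu.1.le hu.2, ← mul_assoc, ← mul_pow,
    neg_one_mul, neg_neg, div_eq_mul_inv]

theorem integral_log_one_sub_pow_div {k : ℕ} (hk : k ≠ 0) :
    ∫ t in Ioo 0 1, log (1 - t) ^ k / t = (-1) ^ k * k ! * ∑' n : ℕ, 1 / ((n : ℝ) + 1) ^ (k + 1) :=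
  calc ∫ t in Ioo 0 1, log (1 - t) ^ k / t
    _ = ∫ u in Ioo 0 1, log u ^ k / (1 - u) := by
      simpa only [sub_sub_cancel] using
        integral_Ioo_zero_one_comp_one_sub fun u : ℝ => log u ^ k / (1 - u)
    _ = ∫ u in Ioo 0 1, (-1) ^ k * ∑' n : ℕ, (-log u) ^ k * u ^ n :=
      setIntegral_congr_fun measurableSet_Ioo fun u hu => log_pow_div_one_sub_eq_tsum hu k
    _ = (-1) ^ k * k ! * ∑' n : ℕ, 1 / ((n : ℝ) + 1) ^ (k + 1) := by
      rw [integral_const_mul, ← (hasSum_integral_neg_log_pow_mul_pow hk).tsum_eq, mul_assoc,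
        ← tsum_mul_left (a := (k ! : ℝ))]
      simp only [mul_one_div]

theorem integral_log_one_sub_cube_div :
    ∫ t in Set.Ioo (0 : ℝ) 1, (Real.log (1 - t)) ^ 3 / t =
      -(Real.pi ^ 4 / 15) := by
  have hzeta : ∑' n : ℕ, 1 / ((n : ℝ) + 1) ^ 4 = π ^ 4 / 90 := by
    simpa only [Nat.cast_add, Nat.cast_one] using
      ((hasSum_nat_add_iff (f := fun n : ℕ => 1 / (n : ℝ) ^ 4) 1).mpr
        (by simpa using hasSum_zeta_four)).tsum_eq
  rw [integral_log_one_sub_pow_div three_ne_zero, hzeta]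
  norm_num [Nat.factorial]
  ring
end

section
/- The integral ∫_0^1 ln t · (ln(1−t))² / t dt equals −ζ(4)/2 = −π⁴/180. -/
/-!
Expanding `log (1 - t) ^ 2 = ∑_{m,n} t^(m+n+2) / ((m+1)(n+1))` and integrating termwise with
`∫₀¹ t^k log t dt = -1/(k+1)²` turns the integral into `-∑_{a,b ≥ 1} 1/(a b (a+b)²)`.
Summing the identity `1/(a²b²) = 1/(a²(a+b)²) + 1/(b²(a+b)²) + 2/(ab(a+b)²)` over all `a, b`
and comparing with the splitting of `ζ(2)² = ∑ 1/(a²b²)` into its diagonal `ζ(4)` and two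
off-diagonal halves, each equal to `∑_{a<c} 1/(a²c²) = ∑_{a,b} 1/(a²(a+b)²)`, gives
`∑ 1/(a b (a+b)²) = ζ(4)/2 = π⁴/180`.
-/

open Function Set Real MeasureTheory

theorem tsum_prod_eq_tsum_diag_add_two_nsmul {α : Type*} [AddCommGroup α] [UniformSpace α]
    [IsUniformAddGroup α] [CompleteSpace α] [T2Space α] {g : ℕ × ℕ → α} (hg : Summable g)
    (hsymm : ∀ p, g p.swap = g p) :
    ∑' p, g p = ∑' n, g (n, n) + 2 • ∑' p : ℕ × ℕ, g (p.1, p.1 + p.2 + 1) := by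
  set d : ℕ → ℕ × ℕ := fun n => (n, n)
  set e : ℕ × ℕ → ℕ × ℕ := fun p => (p.1, p.1 + p.2 + 1)
  have hd : Injective d := fun m n h => congrArg Prod.fst h
  have he : Injective e := fun p q h => by
    simp only [e, Prod.ext_iff] at h ⊢; omega
  have hse : Injective (Prod.swap ∘ e) := Prod.swap_injective.comp he
  have hdisj : Disjoint (range d) (range e) := by
    rw [Set.disjoint_left]
    rintro _ ⟨n, rfl⟩ ⟨p, hp⟩
    simp only [d, e, Prod.ext_iff] at hp; omega
  have hcompl : IsCompl (range d ∪ range e) (range (Prod.swap ∘ e)) := by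
    constructor
    · rw [Set.disjoint_left]
      rintro _ (⟨n, rfl⟩ | ⟨p, rfl⟩) ⟨q, hq⟩ <;>
        simp only [d, e, comp_apply, Prod.swap_prod_mk, Prod.ext_iff] at hq <;> omega
    · refine codisjoint_iff.2 (Set.eq_univ_of_forall ?_)
      rintro ⟨i, j⟩
      rcases lt_trichotomy i j with h | rfl | h
      · exact Or.inl (Or.inr ⟨(i, j - i - 1), Prod.ext rfl (by dsimp [e]; omega)⟩)
      · exact Or.inl (Or.inl ⟨i, rfl⟩)
      · exact Or.inr ⟨(j, i - j - 1), Prod.ext (by dsimp [e]; omega) rfl⟩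
  have hsum := ((hd.hasSum_range_iff.2 (hg.comp_injective hd).hasSum).add_disjoint hdisj
    (he.hasSum_range_iff.2 (hg.comp_injective he).hasSum)).add_isCompl hcompl
    (hse.hasSum_range_iff.2 (hg.comp_injective hse).hasSum)
  have hswap : ∑' p, (g ∘ Prod.swap ∘ e) p = ∑' p, g (e p) := tsum_congr fun p => hsymm (e p)
  rw [hsum.tsum_eq, hswap, two_nsmul, add_assoc]
  rfl

theorem hasSum_integral_of_nonneg {α ι : Type*} [MeasurableSpace α] {μ : Measure α} [Countable ι]
    {F : ι → α → ℝ} {f : α → ℝ} (hF_nonneg : ∀ i, 0 ≤ᵐ[μ] F i) (hF_int : ∀ i, Integrable (F i) μ)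
    (hF_sum : Summable fun i => ∫ a, F i a ∂μ) (hf : ∀ᵐ a ∂μ, HasSum (fun i => F i a) (f a)) :
    HasSum (fun i => ∫ a, F i a ∂μ) (∫ a, f a ∂μ) := by
  have hnorm : ∀ i, ∫ a, ‖F i a‖ ∂μ = ∫ a, F i a ∂μ := fun i =>
    integral_congr_ae ((hF_nonneg i).mono fun a ha => Real.norm_of_nonneg ha)
  rw [integral_congr_ae (hf.mono fun a ha => ha.tsum_eq.symm)]
  exact hasSum_integral_of_summable_integral_norm hF_int (by simpa only [hnorm] using hF_sum)

noncomputable def antiderivNegLogMulPow (n : ℕ) (t : ℝ) : ℝ :=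
  t ^ (n + 1) / ((n : ℝ) + 1) ^ 2 - t ^ (n + 1) * log t / ((n : ℝ) + 1)

theorem continuous_antiderivNegLogMulPow (n : ℕ) : Continuous (antiderivNegLogMulPow n) := by
  have hmul : Continuous fun t : ℝ => t ^ (n + 1) * log t :=
    ((continuous_pow n).mul continuous_mul_log).congr fun t => by simp only [Pi.mul_apply]; ring
  exact ((continuous_pow (n + 1)).div_const _).sub (hmul.div_const _)

theorem hasDerivAt_antiderivNegLogMulPow (n : ℕ) {x : ℝ} (hx : x ≠ 0) :
    HasDerivAt (antiderivNegLogMulPow n) (-log x * x ^ n) x := by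
  have hpow := hasDerivAt_pow (n + 1) x
  refine ((hpow.div_const (((n : ℝ) + 1) ^ 2)).sub
    ((hpow.mul (hasDerivAt_log hx)).div_const ((n : ℝ) + 1))).congr_deriv ?_
  rw [Nat.add_sub_cancel, pow_succ]
  push_cast
  field_simp
  ring

theorem integrableOn_neg_log_mul_pow (n : ℕ) :
    IntegrableOn (fun t => -log t * t ^ n) (Ioc 0 1) :=
  intervalIntegral.integrableOn_deriv_of_nonneg
    (continuous_antiderivNegLogMulPow n).continuousOn
    (fun _ hx => hasDerivAt_antiderivNegLogMulPow n hx.1.ne') fun _ hx =>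
      mul_nonneg (neg_nonneg.2 (log_nonpos hx.1.le hx.2.le)) (pow_nonneg hx.1.le n)

theorem integral_neg_log_mul_pow (n : ℕ) :
    ∫ t in Ioo 0 1, -log t * t ^ n = 1 / ((n : ℝ) + 1) ^ 2 := by
  rw [← integral_Ioc_eq_integral_Ioo, ← intervalIntegral.integral_of_le zero_le_one,
    intervalIntegral.integral_eq_sub_of_hasDerivAt_of_le zero_le_one
      (continuous_antiderivNegLogMulPow n).continuousOn
      (fun x hx => hasDerivAt_antiderivNegLogMulPow n hx.1.ne')
      ((intervalIntegrable_iff_integrableOn_Ioc_of_le zero_le_one).2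
        (integrableOn_neg_log_mul_pow n))]
  simp [antiderivNegLogMulPow]

theorem hasSum_log_one_sub_sq {x : ℝ} (hx : |x| < 1) :
    HasSum (fun p : ℕ × ℕ => x ^ (p.1 + p.2 + 2) / (((p.1 : ℝ) + 1) * ((p.2 : ℝ) + 1)))
      (log (1 - x) ^ 2) := by
  have hlog := hasSum_pow_div_log_of_abs_lt_one hx
  have hnorm : Summable fun n : ℕ => ‖x ^ (n + 1) / (n + 1)‖ := by
    convert (hasSum_pow_div_log_of_abs_lt_one (abs_abs x ▸ hx)).summable using 2 with n
    rw [norm_div, norm_pow, Real.norm_eq_abs, Real.norm_of_nonneg (by positivity)]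
  have hprod := hlog.mul hlog (summable_mul_of_summable_norm hnorm hnorm)
  rw [neg_mul_neg, ← sq] at hprod
  have hterm : ∀ p : ℕ × ℕ, x ^ (p.1 + 1) / ((p.1 : ℝ) + 1) * (x ^ (p.2 + 1) / ((p.2 : ℝ) + 1)) =
      x ^ (p.1 + p.2 + 2) / (((p.1 : ℝ) + 1) * ((p.2 : ℝ) + 1)) := fun p => by
    rw [div_mul_div_comm, ← pow_add]
    ring_nf
  simpa only [hterm] using hprod

theorem one_div_sq_mul_sq_eq {x y : ℝ} (hx : x ≠ 0) (hy : y ≠ 0) (hxy : x + y ≠ 0) :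
    1 / (x ^ 2 * y ^ 2) =
      1 / (x ^ 2 * (x + y) ^ 2) + 1 / (y ^ 2 * (x + y) ^ 2) + 2 / (x * y * (x + y) ^ 2) := by
  field_simp
  ring

theorem hasSum_one_div_nat_add_one_pow_four :
    HasSum (fun n : ℕ => 1 / ((n : ℝ) + 1) ^ 4) (π ^ 4 / 90) := by
  simpa using (hasSum_nat_add_iff' 1).2 hasSum_zeta_four

theorem summable_one_div_nat_add_one_sq_mul_sq :
    Summable fun p : ℕ × ℕ => 1 / (((p.1 : ℝ) + 1) ^ 2 * ((p.2 : ℝ) + 1) ^ 2) := by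
  have h : Summable fun n : ℕ => 1 / ((n : ℝ) + 1) ^ 2 := by
    simpa using (summable_nat_add_iff 1).2 (Real.summable_one_div_nat_pow.2 one_lt_two)
  simpa only [one_div_mul_one_div] using
    h.mul_of_nonneg h (fun n => by positivity) (fun n => by positivity)

theorem hasSum_one_div_mul_mul_add_sq :
    HasSum (fun p : ℕ × ℕ => 1 / (((p.1 : ℝ) + 1) * ((p.2 : ℝ) + 1) * ((p.1 : ℝ) + p.2 + 2) ^ 2))
      (π ^ 4 / 180) := by
  set g : ℕ × ℕ → ℝ := fun p => 1 / (((p.1 : ℝ) + 1) ^ 2 * ((p.2 : ℝ) + 1) ^ 2)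
  set u : ℕ × ℕ → ℝ := fun p => 1 / (((p.1 : ℝ) + 1) ^ 2 * ((p.1 : ℝ) + p.2 + 2) ^ 2)
  set b : ℕ × ℕ → ℝ := fun p =>
    1 / (((p.1 : ℝ) + 1) * ((p.2 : ℝ) + 1) * ((p.1 : ℝ) + p.2 + 2) ^ 2)
  have hg : Summable g := summable_one_div_nat_add_one_sq_mul_sq
  have hsplit : ∀ p, g p = u p + u p.swap + 2 * b p := fun p => by
    have := one_div_sq_mul_sq_eq (x := p.1 + 1) (y := p.2 + 1) (by positivity) (by positivity)
      (by positivity)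
    simp only [g, u, b, Prod.fst_swap, Prod.snd_swap]
    convert this using 3 <;> ring
  have hu_nonneg : ∀ p, 0 ≤ u p := fun p => by positivity
  have hb_nonneg : ∀ p, 0 ≤ b p := fun p => by positivity
  have hu : Summable u := hg.of_nonneg_of_le hu_nonneg fun p => by
    linarith [hsplit p, hu_nonneg p.swap, hb_nonneg p]
  have hb : Summable b := hg.of_nonneg_of_le hb_nonneg fun p => by
    linarith [hsplit p, hu_nonneg p, hu_nonneg p.swap, hb_nonneg p]
  have hdiag : ∑' p, g p = π ^ 4 / 90 + 2 * ∑' p, u p := by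
    have hgg : ∀ n : ℕ, g (n, n) = 1 / ((n : ℝ) + 1) ^ 4 := fun n => by simp only [g]; ring
    have hgu : ∀ p : ℕ × ℕ, g (p.1, p.1 + p.2 + 1) = u p := fun p => by
      simp only [g, u]; push_cast; ring
    rw [tsum_prod_eq_tsum_diag_add_two_nsmul hg fun p => by
        simp only [g, Prod.fst_swap, Prod.snd_swap]; ring,
      tsum_congr hgg, tsum_congr hgu, hasSum_one_div_nat_add_one_pow_four.tsum_eq, two_nsmul,
      two_mul]
  have hoff : ∑' p, g p = 2 * ∑' p, u p + 2 * ∑' p, b p := by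
    have hus : Summable fun p : ℕ × ℕ => u p.swap := hu.comp_injective Prod.swap_injective
    have hswap : ∑' p : ℕ × ℕ, u p.swap = ∑' p, u p := (Equiv.prodComm ℕ ℕ).tsum_eq u
    rw [tsum_congr hsplit, (hu.add hus).tsum_add (hb.mul_left 2), hu.tsum_add hus, tsum_mul_left,
      hswap]
    ring
  convert hb.hasSum using 1
  linarith

theorem integral_neg_log_mul_pow_div (m n : ℕ) :
    ∫ t in Ioo 0 1, -log t * t ^ (m + n + 1) / (((m : ℝ) + 1) * ((n : ℝ) + 1)) =
      1 / (((m : ℝ) + 1) * ((n : ℝ) + 1) * ((m : ℝ) + n + 2) ^ 2) := by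
  rw [integral_div, integral_neg_log_mul_pow]
  push_cast
  field_simp
  ring

theorem hasSum_neg_log_mul_log_one_sub_sq_div {t : ℝ} (ht₀ : t ≠ 0) (ht : |t| < 1) :
    HasSum (fun p : ℕ × ℕ => -log t * t ^ (p.1 + p.2 + 1) / (((p.1 : ℝ) + 1) * ((p.2 : ℝ) + 1)))
      (-log t * log (1 - t) ^ 2 / t) := by
  have hterm : ∀ p : ℕ × ℕ,
      -log t / t * (t ^ (p.1 + p.2 + 2) / (((p.1 : ℝ) + 1) * ((p.2 : ℝ) + 1))) =
        -log t * t ^ (p.1 + p.2 + 1) / (((p.1 : ℝ) + 1) * ((p.2 : ℝ) + 1)) := fun p => by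
    rw [pow_succ _ (p.1 + p.2 + 1)]
    field_simp
  rw [mul_div_right_comm]
  simpa only [hterm] using (hasSum_log_one_sub_sq ht).mul_left (-log t / t)

theorem integral_log_mul_log_one_sub_sq_div :
    ∫ t in Set.Ioo (0 : ℝ) 1, Real.log t * (Real.log (1 - t)) ^ 2 / t =
      -(Real.pi ^ 4 / 180) := by
  have hmem : ∀ᵐ t ∂volume.restrict (Ioo (0 : ℝ) 1), t ∈ Ioo (0 : ℝ) 1 :=
    ae_restrict_mem measurableSet_Ioo
  have hsum := hasSum_integral_of_nonneg
    (F := fun (p : ℕ × ℕ) t => -log t * t ^ (p.1 + p.2 + 1) / (((p.1 : ℝ) + 1) * ((p.2 : ℝ) + 1)))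
    (fun p => hmem.mono fun t ht => div_nonneg
      (mul_nonneg (neg_nonneg.2 (log_nonpos ht.1.le ht.2.le)) (pow_nonneg ht.1.le _))
      (by positivity))
    (fun p => ((integrableOn_neg_log_mul_pow _).mono_set Ioo_subset_Ioc_self).div_const _)
    (by simpa only [integral_neg_log_mul_pow_div] using hasSum_one_div_mul_mul_add_sq.summable)
    (hmem.mono fun t ht => hasSum_neg_log_mul_log_one_sub_sq_div ht.1.ne'
      (abs_lt.2 ⟨by linarith [ht.1], ht.2⟩))
  simp only [integral_neg_log_mul_pow_div] at hsum
  rw [← neg_eq_iff_eq_neg, ← integral_neg, hasSum_one_div_mul_mul_add_sq.unique hsum]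
  simp only [neg_mul, neg_div]
end

section
/- The improper integral of z⁶ · ln(1+e^z)/(1+e^z) over the whole real line equals 5715·ζ(8), i.e. ∫_{-∞}^{+∞} z⁶ ln(1+eᶻ)/(1+eᶻ) dz = 5715·π⁸/9450. -/
/-!
Folding the integral onto `(0, ∞)` and using `log (1 + e^z) = z + log (1 + e^{-z})`, the evenness
of `z^6` turns the integrand into `z^6 log (1 + e^{-z}) + z^7 / (1 + e^z)`. Both factors are
alternating series in `e^{-(n+1) z}`; integrating termwise with `∫₀^∞ z^m e^{-cz} dz = m!/c^{m+1}`
gives `(6! + 7!) η(8)`, and splitting `ζ(8)` into even and odd terms gives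
`η(8) = (1 - 2⁻⁷) ζ(8)`, so the integral is `5760 · 127/128 · ζ(8) = 5715 ζ(8)`.
-/

open Real MeasureTheory Set
open scoped Nat

theorem bernoulli'_five : bernoulli' 5 = 0 := by
  rw [bernoulli'_def]
  norm_num [Finset.sum_range_succ, Nat.choose]

theorem bernoulli'_six : bernoulli' 6 = 1 / 42 := by
  rw [bernoulli'_def]
  norm_num [Finset.sum_range_succ, Nat.choose, bernoulli'_five]

theorem bernoulli'_seven : bernoulli' 7 = 0 := by
  rw [bernoulli'_def]
  norm_num [Finset.sum_range_succ, Nat.choose, bernoulli'_five, bernoulli'_six]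

theorem bernoulli'_eight : bernoulli' 8 = -1 / 30 := by
  rw [bernoulli'_def]
  norm_num [Finset.sum_range_succ, Nat.choose, bernoulli'_five, bernoulli'_six,
    bernoulli'_seven]

theorem hasSum_zeta_eight : HasSum (fun n : ℕ => (1 : ℝ) / (n : ℝ) ^ 8) (π ^ 8 / 9450) := by
  convert hasSum_zeta_nat (k := 4) (by norm_num) using 1
  rw [bernoulli_eq_bernoulli'_of_ne_one (by decide), bernoulli'_eight]
  norm_num [Nat.factorial]
  ring

theorem HasSum.one_div_nat_add_one_pow {p : ℕ} (hp : p ≠ 0) {S : ℝ}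
    (h : HasSum (fun n : ℕ => 1 / (n : ℝ) ^ p) S) :
    HasSum (fun n : ℕ => 1 / ((n : ℝ) + 1) ^ p) S := by
  rw [← hasSum_nat_add_iff' 1] at h
  simpa [zero_pow hp] using h

theorem hasSum_neg_one_pow_div_nat_add_one_pow {p : ℕ} {S : ℝ}
    (h : HasSum (fun n : ℕ => 1 / ((n : ℝ) + 1) ^ p) S) :
    HasSum (fun n : ℕ => (-1) ^ n / ((n : ℝ) + 1) ^ p) ((1 - 2 / 2 ^ p) * S) := by
  set f := fun n : ℕ => 1 / ((n : ℝ) + 1) ^ p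
  have hodd : HasSum (fun k => f (2 * k + 1)) (S / 2 ^ p) := by
    have hf : (fun k => f (2 * k + 1)) = fun k => f k / 2 ^ p := by
      ext k
      simp only [f]
      push_cast
      rw [show (2 * (k : ℝ) + 1 + 1) = 2 * (k + 1) by ring, mul_pow]
      field_simp
    rw [hf]
    exact h.div_const _
  have heven : HasSum (fun k => f (2 * k)) (S - S / 2 ^ p) := by
    obtain ⟨E, hE⟩ : Summable (fun k => f (2 * k)) :=
      h.summable.comp_injective (mul_right_injective₀ two_ne_zero)
    rwa [show S - S / 2 ^ p = E by linarith [(hE.even_add_odd hodd).unique h]]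
  convert HasSum.even_add_odd (f := fun n : ℕ => (-1) ^ n / ((n : ℝ) + 1) ^ p)
    (by simpa [pow_mul, f] using heven) (by simpa [pow_succ, pow_mul, f, neg_div] using hodd.neg)
    using 1
  ring

theorem integrableOn_Ioi_pow_mul_exp_neg_mul (k : ℕ) {c : ℝ} (hc : 0 < c) :
    IntegrableOn (fun z : ℝ => z ^ k * exp (-(c * z))) (Ioi 0) := by
  refine (integrableOn_rpow_mul_exp_neg_mul_rpow (p := 1) (s := k)
    (by linarith [(k.cast_nonneg : (0 : ℝ) ≤ k)]) one_pos hc).congr_fun (fun z _ => ?_)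
    measurableSet_Ioi
  simp [rpow_natCast]

theorem integral_Ioi_pow_mul_exp_neg_mul (k : ℕ) {c : ℝ} (hc : 0 < c) :
    ∫ z in Ioi (0 : ℝ), z ^ k * exp (-(c * z)) = k ! / c ^ (k + 1) := by
  have h := integral_rpow_mul_exp_neg_mul_Ioi (a := (k : ℝ) + 1) (by positivity) hc
  rw [add_sub_cancel_right, Gamma_nat_eq_factorial, ← Nat.cast_succ, rpow_natCast] at h
  calc ∫ z in Ioi (0 : ℝ), z ^ k * exp (-(c * z))
      = ∫ z in Ioi (0 : ℝ), z ^ (k : ℝ) * exp (-(c * z)) :=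
        setIntegral_congr_fun measurableSet_Ioi fun z _ => by rw [rpow_natCast]
    _ = k ! / c ^ (k + 1) := by rw [h, Nat.succ_eq_add_one, one_div_pow]; ring

theorem integrableOn_Ioi_pow_mul_of_abs_le_exp_neg (m : ℕ) {f : ℝ → ℝ} (hf : Continuous f)
    (hle : ∀ z > 0, |f z| ≤ exp (-z)) : IntegrableOn (fun z => z ^ m * f z) (Ioi 0) := by
  refine (integrableOn_Ioi_pow_mul_exp_neg_mul m one_pos).mono'
    ((continuous_pow m).mul hf).aestronglyMeasurable.restrict ?_
  refine (ae_restrict_iff' measurableSet_Ioi).mpr (ae_of_all _ fun z (hz : 0 < z) => ?_)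
  rw [norm_mul, norm_pow, norm_of_nonneg hz.le, one_mul, Real.norm_eq_abs]
  gcongr
  exact hle z hz

theorem hasSum_integral_Ioi_pow_mul_of_hasSum_exp_neg (m : ℕ) {a : ℕ → ℝ} {f : ℝ → ℝ}
    (hf : ∀ z > 0, HasSum (fun n : ℕ => a n * exp (-((n + 1) * z))) (f z))
    (ha : Summable fun n : ℕ => |a n| / ((n : ℝ) + 1) ^ (m + 1)) :
    HasSum (fun n : ℕ => a n * (m ! / ((n : ℝ) + 1) ^ (m + 1)))
      (∫ z in Ioi (0 : ℝ), z ^ m * f z) := by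
  set F := fun (n : ℕ) (z : ℝ) => a n * (z ^ m * exp (-((n + 1) * z)))
  have hF_int (n : ℕ) : IntegrableOn (F n) (Ioi 0) :=
    (integrableOn_Ioi_pow_mul_exp_neg_mul m n.cast_add_one_pos).const_mul _
  have hF_norm (n : ℕ) :
      ∫ z in Ioi (0 : ℝ), ‖F n z‖ = m ! * (|a n| / ((n : ℝ) + 1) ^ (m + 1)) := by
    rw [mul_div_left_comm, ← integral_Ioi_pow_mul_exp_neg_mul m n.cast_add_one_pos,
      ← integral_const_mul]
    refine setIntegral_congr_fun measurableSet_Ioi fun z (hz : 0 < z) => ?_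
    simp only [F, norm_mul, norm_pow, norm_of_nonneg hz.le, norm_of_nonneg (exp_pos _).le,
      Real.norm_eq_abs]
  have hsum := hasSum_integral_of_summable_integral_norm hF_int
    (by simpa only [hF_norm] using ha.mul_left (m ! : ℝ))
  have hF_integral (n : ℕ) :
      ∫ z in Ioi (0 : ℝ), F n z = a n * (m ! / ((n : ℝ) + 1) ^ (m + 1)) := by
    rw [integral_const_mul, integral_Ioi_pow_mul_exp_neg_mul m n.cast_add_one_pos]
  have hF_tsum : ∫ z in Ioi (0 : ℝ), ∑' n, F n z = ∫ z in Ioi (0 : ℝ), z ^ m * f z :=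
    setIntegral_congr_fun measurableSet_Ioi fun z (hz : 0 < z) =>
      (((hf z hz).mul_left (z ^ m)).congr_fun fun n => mul_left_comm _ _ _).tsum_eq
  simpa only [hF_integral, hF_tsum] using hsum

theorem integral_eq_integral_Ioi_add_comp_neg {E : Type*} [NormedAddCommGroup E]
    [NormedSpace ℝ E] {f : ℝ → E} (hpos : IntegrableOn f (Ioi 0))
    (hneg : IntegrableOn (fun x => f (-x)) (Ioi 0)) :
    ∫ x, f x = ∫ x in Ioi 0, (f x + f (-x)) := by
  have hIic : IntegrableOn f (Iic 0) := by
    rw [← (Measure.measurePreserving_neg (volume : Measure ℝ)).integrableOn_comp_preimage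
      (Homeomorph.neg ℝ).measurableEmbedding, neg_preimage, neg_Iic, neg_zero,
      integrableOn_Ici_iff_integrableOn_Ioi]
    exact hneg
  rw [← intervalIntegral.integral_Iic_add_Ioi hIic hpos, integral_add hpos hneg,
    integral_comp_neg_Ioi, neg_zero, add_comm]

theorem exp_neg_nat_add_one_mul (n : ℕ) (z : ℝ) :
    exp (-((n + 1) * z)) = exp (-z) ^ (n + 1) := by
  rw [← exp_nat_mul]
  push_cast
  ring_nf

theorem log_one_add_exp_eq_add_log_one_add_exp_neg (z : ℝ) :
    log (1 + exp z) = z + log (1 + exp (-z)) := by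
  rw [← log_exp z, ← log_mul (exp_ne_zero z) (by positivity), mul_add, mul_one, ← exp_add,
    log_exp, add_neg_cancel, exp_zero, add_comm]

theorem log_one_add_exp_div_add_log_one_add_exp_neg_div (z : ℝ) :
    log (1 + exp z) / (1 + exp z) + log (1 + exp (-z)) / (1 + exp (-z)) =
      log (1 + exp (-z)) + z / (1 + exp z) := by
  rw [log_one_add_exp_eq_add_log_one_add_exp_neg z, exp_neg]
  field_simp
  ring

theorem hasSum_log_one_add_exp_neg {z : ℝ} (hz : 0 < z) :
    HasSum (fun n : ℕ => (-1) ^ n / ((n : ℝ) + 1) * exp (-((n + 1) * z)))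
      (log (1 + exp (-z))) := by
  have ht : |-exp (-z)| < 1 := by
    rw [abs_neg, abs_of_pos (exp_pos _), exp_lt_one_iff]; linarith
  have h := (hasSum_pow_div_log_of_abs_lt_one ht).neg
  rw [sub_neg_eq_add, neg_neg] at h
  refine h.congr_fun fun n => ?_
  rw [exp_neg_nat_add_one_mul, neg_pow, pow_succ]
  ring

theorem hasSum_one_div_one_add_exp {z : ℝ} (hz : 0 < z) :
    HasSum (fun n : ℕ => (-1) ^ n * exp (-((n + 1) * z))) (1 / (1 + exp z)) := by
  have ht : ‖-exp (-z)‖ < 1 := by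
    rw [norm_neg, norm_of_nonneg (exp_pos _).le, exp_lt_one_iff]; linarith
  have h := (hasSum_geometric_of_norm_lt_one ht).mul_left (exp (-z))
  rw [show exp (-z) * (1 - -exp (-z))⁻¹ = 1 / (1 + exp z) by
    rw [sub_neg_eq_add, exp_neg]; field_simp; ring] at h
  refine h.congr_fun fun n => ?_
  rw [exp_neg_nat_add_one_mul, neg_pow, pow_succ]
  ring

theorem summable_one_div_nat_add_one_pow {p : ℕ} (hp : 1 < p) :
    Summable fun n : ℕ => 1 / ((n : ℝ) + 1) ^ p := by
  simpa using (summable_nat_add_iff 1).mpr (Real.summable_one_div_nat_pow.mpr hp)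

theorem integrableOn_Ioi_pow_mul_log_one_add_exp_neg (k : ℕ) :
    IntegrableOn (fun z => z ^ k * log (1 + exp (-z))) (Ioi 0) := by
  refine integrableOn_Ioi_pow_mul_of_abs_le_exp_neg k
    (by fun_prop (disch := intro z; positivity)) fun z _ => ?_
  rw [abs_of_nonneg (log_nonneg (by linarith [exp_pos (-z)]))]
  linarith [log_le_sub_one_of_pos (by positivity : 0 < 1 + exp (-z))]

theorem integrableOn_Ioi_pow_mul_one_div_one_add_exp (k : ℕ) :
    IntegrableOn (fun z => z ^ k * (1 / (1 + exp z))) (Ioi 0) := by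
  refine integrableOn_Ioi_pow_mul_of_abs_le_exp_neg k
    (by fun_prop (disch := intro z; positivity)) fun z _ => ?_
  rw [abs_of_pos (by positivity), exp_neg, ← one_div]
  gcongr
  linarith

theorem hasSum_integral_Ioi_pow_mul_log_one_add_exp_neg (k : ℕ) :
    HasSum (fun n : ℕ => (-1) ^ n * (k ! / ((n : ℝ) + 1) ^ (k + 2)))
      (∫ z in Ioi (0 : ℝ), z ^ k * log (1 + exp (-z))) := by
  refine (hasSum_integral_Ioi_pow_mul_of_hasSum_exp_neg k
    (fun z hz => hasSum_log_one_add_exp_neg hz)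
    ((summable_one_div_nat_add_one_pow (p := k + 2) (by omega)).congr fun n => ?_)).congr_fun
    fun n => ?_
  · rw [abs_div, abs_neg_one_pow, abs_of_pos n.cast_add_one_pos, div_div, ← pow_succ']
  · field_simp
    ring

theorem hasSum_integral_Ioi_pow_mul_one_div_one_add_exp {k : ℕ} (hk : k ≠ 0) :
    HasSum (fun n : ℕ => (-1) ^ n * (k ! / ((n : ℝ) + 1) ^ (k + 1)))
      (∫ z in Ioi (0 : ℝ), z ^ k * (1 / (1 + exp z))) :=
  hasSum_integral_Ioi_pow_mul_of_hasSum_exp_neg k (fun z hz => hasSum_one_div_one_add_exp hz)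
    ((summable_one_div_nat_add_one_pow (p := k + 1) (by omega)).congr fun n => by
      rw [abs_neg_one_pow])

theorem pow_mul_log_one_add_exp_div_add_comp_neg {k : ℕ} (hk : Even k) (z : ℝ) :
    z ^ k * log (1 + exp z) / (1 + exp z) + (-z) ^ k * log (1 + exp (-z)) / (1 + exp (-z)) =
      z ^ k * log (1 + exp (-z)) + z ^ (k + 1) * (1 / (1 + exp z)) := by
  rw [hk.neg_pow, mul_div_assoc, mul_div_assoc, ← mul_add,
    log_one_add_exp_div_add_log_one_add_exp_neg_div]
  ring

theorem hasSum_integral_pow_mul_log_one_add_exp_div {k : ℕ} (hk : Even k) :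
    HasSum (fun n : ℕ => (k + 2) * k ! * ((-1) ^ n / ((n : ℝ) + 1) ^ (k + 2)))
      (∫ z, z ^ k * log (1 + exp z) / (1 + exp z)) := by
  set g := fun z : ℝ => z ^ k * log (1 + exp z) / (1 + exp z)
  have hg_cont : Continuous g := by fun_prop (disch := intro z; positivity)
  have hg_nonneg (z : ℝ) : 0 ≤ g z :=
    div_nonneg (mul_nonneg (hk.pow_nonneg z) (log_nonneg (by linarith [exp_pos z])))
      (by positivity)
  have hlog_int := integrableOn_Ioi_pow_mul_log_one_add_exp_neg k
  have hinv_int := integrableOn_Ioi_pow_mul_one_div_one_add_exp (k + 1)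
  have hfold_int : IntegrableOn (fun z => g z + g (-z)) (Ioi 0) :=
    (hlog_int.add hinv_int).congr_fun
      (fun z _ => (pow_mul_log_one_add_exp_div_add_comp_neg hk z).symm) measurableSet_Ioi
  -- `g ≥ 0`, so both halves of the fold are dominated by the integrable sum
  have hg_int : IntegrableOn g (Ioi 0) := by
    refine hfold_int.mono' hg_cont.aestronglyMeasurable.restrict (ae_of_all _ fun z => ?_)
    rw [norm_of_nonneg (hg_nonneg z)]
    linarith [hg_nonneg (-z)]
  have hg_neg_int : IntegrableOn (fun z => g (-z)) (Ioi 0) := by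
    refine hfold_int.mono' (hg_cont.comp continuous_neg).aestronglyMeasurable.restrict
      (ae_of_all _ fun z => ?_)
    rw [norm_of_nonneg (hg_nonneg (-z))]
    linarith [hg_nonneg z]
  rw [integral_eq_integral_Ioi_add_comp_neg hg_int hg_neg_int,
    integral_congr_ae (ae_of_all _ (pow_mul_log_one_add_exp_div_add_comp_neg hk)),
    integral_add hlog_int hinv_int]
  refine ((hasSum_integral_Ioi_pow_mul_log_one_add_exp_neg k).add
    (hasSum_integral_Ioi_pow_mul_one_div_one_add_exp k.succ_ne_zero)).congr_fun fun n => ?_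
  push_cast [Nat.factorial_succ]
  field_simp
  ring

theorem zeta8_integral :
    ∫ z : ℝ, z ^ 6 * Real.log (1 + Real.exp z) / (1 + Real.exp z) =
      5715 * (Real.pi ^ 8 / 9450) := by
  have heta := hasSum_neg_one_pow_div_nat_add_one_pow
    (hasSum_zeta_eight.one_div_nat_add_one_pow (by norm_num))
  have h := (hasSum_integral_pow_mul_log_one_add_exp_div (k := 6) (by decide)).unique
    (heta.mul_left _)
  rw [h]
  norm_num [Nat.factorial]
  ring
end
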